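/- Let K be an H-graded field, I a finite group of graded automorphisms of K acting trivially on K₁, F = K^I, and V = ρ(F^×) ⊆ ρ(K^×) the set of grading indices r such that I acts trivially on K_r. Then the pairing ξ: I × (ρ(K^×)/V) → K₁^× sending (σ, r mod V) to σ(x)/x for any nonzero x ∈ K_r is well-defined, biadditive, nondegenerate in each variable, and consequently ρ(K^×)/V is finite of order equal to #I, so [K:F] = #I. -/

import Mathlib

open scoped DirectSum

/-- An `H`-graded field: a nonzero commutative ring with an internal grading by the
commutative group `H` in which every nonzero homogeneous element is invertible
(with homogeneous inverse). -/
structure GradedField (H : Type*) [CommGroup H] [DecidableEq H] (K : Type*) [CommRing K] where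
  comp : H → AddSubgroup K
  one_mem : (1 : K) ∈ comp 1
  mul_mem : ∀ {g h : H} {x y : K}, x ∈ comp g → y ∈ comp h → x * y ∈ comp (g * h)
  isInternal : DirectSum.IsInternal fun h : H => comp h
  zero_ne_one : (0 : K) ≠ 1
  inv_mem : ∀ {h : H} {x : K}, x ∈ comp h → x ≠ 0 → ∃ y ∈ comp h⁻¹, x * y = 1

namespace GradedField

variable {H : Type*} [CommGroup H] [DecidableEq H] {K : Type*} [CommRing K] (F : GradedField H K)

/-- A homogeneous element. -/
def Homogeneous (x : K) : Prop := ∃ h, x ∈ F.comp h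

/-- A subring is graded if each of its elements is a sum of homogeneous elements of the
subring. -/
def IsGradedSubring (R : Subring K) : Prop :=
  ∀ x ∈ R, x ∈ AddSubgroup.closure {y : K | y ∈ R ∧ F.Homogeneous y}

/-- A graded subfield: a graded subring closed under inverses of nonzero homogeneous
elements. -/
structure IsGradedSubfield (L : Subring K) : Prop where
  graded : F.IsGradedSubring L
  inv_mem : ∀ x ∈ L, F.Homogeneous x → x ≠ 0 → Ring.inverse x ∈ L

/-- A graded valuation ring of the graded subfield `L`: a graded subring `R ⊆ L` such that
every nonzero homogeneous element of `L` lies in `R` or has its inverse in `R`. -/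
def IsGradedValRing (L R : Subring K) : Prop :=
  R ≤ L ∧ F.IsGradedSubring R ∧
    ∀ x ∈ L, F.Homogeneous x → x ≠ 0 → (x ∈ R ∨ Ring.inverse x ∈ R)

/-- The identity component `K₁`, as a subring. -/
def oneComponent : Subring K where
  carrier := F.comp 1
  one_mem' := F.one_mem
  mul_mem' := fun ha hb => by simpa using F.mul_mem ha hb
  add_mem' := fun ha hb => (F.comp 1).add_mem ha hb
  zero_mem' := (F.comp 1).zero_mem
  neg_mem' := fun ha => (F.comp 1).neg_mem ha

theorem mem_oneComponent {x : K} : x ∈ F.oneComponent ↔ x ∈ F.comp 1 := Iff.rfl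

/-- The value group `ρ(L^×) ⊆ H` of a graded subfield `L`. -/
def valueGroup (L : Subring K)
    (hL : ∀ x ∈ L, F.Homogeneous x → x ≠ 0 → Ring.inverse x ∈ L) : Subgroup H where
  carrier := {h | ∃ x ∈ F.comp h, x ≠ 0 ∧ x ∈ L}
  one_mem' := ⟨1, F.one_mem, Ne.symm F.zero_ne_one, L.one_mem⟩
  mul_mem' := by
    rintro g h ⟨x, hx, hx0, hxL⟩ ⟨y, hy, hy0, hyL⟩
    obtain ⟨x', hx', hxx'⟩ := F.inv_mem hx hx0
    obtain ⟨y', hy', hyy'⟩ := F.inv_mem hy hy0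
    refine ⟨x * y, F.mul_mem hx hy, ?_, L.mul_mem hxL hyL⟩
    intro h0
    have h1 : x * y * (x' * y') = 1 := by rw [mul_mul_mul_comm, hxx', hyy', one_mul]
    rw [h0, zero_mul] at h1
    exact F.zero_ne_one h1
  inv_mem' := by
    rintro g ⟨x, hx, hx0, hxL⟩
    obtain ⟨y, hy, hxy⟩ := F.inv_mem hx hx0
    have hu : IsUnit x := IsUnit.of_mul_eq_one y hxy
    have hyx : Ring.inverse x = y := by
      calc Ring.inverse x = Ring.inverse x * (x * y) := by rw [hxy, mul_one]
        _ = Ring.inverse x * x * y := by ring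
        _ = y := by rw [Ring.inverse_mul_cancel x hu, one_mul]
    refine ⟨y, hy, ?_, ?_⟩
    · intro h0; rw [h0, mul_zero] at hxy; exact F.zero_ne_one hxy
    · rw [← hyx]; exact hL x hxL ⟨g, hx⟩ hx0

/-- The value group `ρ(K^×)` of the whole graded field. -/
def fullValueGroup : Subgroup H :=
  F.valueGroup ⊤ (fun _ _ _ _ => Subring.mem_top _)

/-- `K₁` as a module over `L₁ = K₁ ∩ L`. -/
def oneSubmodule (L : Subring K) : Submodule ↥(F.oneComponent ⊓ L) K where
  carrier := F.comp 1
  add_mem' := fun ha hb => (F.comp 1).add_mem ha hb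
  zero_mem' := (F.comp 1).zero_mem
  smul_mem' := fun c x hx => by
    have hc : (c : K) ∈ F.comp 1 := ((Subring.mem_inf).mp c.2).1
    have := F.mul_mem hc hx
    simpa [Subring.smul_def] using this

/-- A graded automorphism: a ring automorphism preserving each graded component. -/
def IsGradedAut (σ : RingAut K) : Prop := ∀ (h : H) (x : K), x ∈ F.comp h → σ x ∈ F.comp h

end GradedField

/-- The fixed subring `K^G` of a group of ring automorphisms. -/
def fixedSubring {K : Type*} [CommRing K] (G : Subgroup (RingAut K)) : Subring K where
  carrier := {x | ∀ σ ∈ G, σ x = x}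
  one_mem' := fun σ _ => map_one σ
  mul_mem' := fun ha hb σ hσ => by rw [map_mul, ha σ hσ, hb σ hσ]
  add_mem' := fun ha hb σ hσ => by rw [map_add, ha σ hσ, hb σ hσ]
  zero_mem' := fun σ _ => map_zero σ
  neg_mem' := fun ha σ hσ => by rw [map_neg, ha σ hσ]

theorem mem_fixedSubring {K : Type*} [CommRing K] {G : Subgroup (RingAut K)} {x : K} :
    x ∈ fixedSubring G ↔ ∀ σ ∈ G, σ x = x := Iff.rfl


namespace GradedField

variable {H : Type*} [CommGroup H] [DecidableEq H] {K : Type*} [CommRing K]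
variable (F : GradedField H K)

/-- Decomposition of an element into its homogeneous components. -/
noncomputable def decompose (x : K) : ⨁ h : H, ↥(F.comp h) :=
  (Equiv.ofBijective _ F.isInternal).symm x

/-- The degree-`h` homogeneous component of `x`. -/
noncomputable def component (h : H) (x : K) : K := (F.decompose x h : K)

/-- The inertia subgroup of `G`: graded automorphisms in `G` acting trivially on `K₁`. -/
def inertia (G : Subgroup (RingAut K)) : Subgroup (RingAut K) where
  carrier := {σ | σ ∈ G ∧ ∀ x ∈ F.comp 1, σ x = x}
  one_mem' := ⟨G.one_mem, fun _ _ => rfl⟩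
  mul_mem' := fun {a b} ha hb => ⟨G.mul_mem ha.1 hb.1, fun x hx => by
    show a (b x) = x
    rw [hb.2 x hx, ha.2 x hx]⟩
  inv_mem' := fun {a} ha => ⟨G.inv_mem ha.1, fun x hx => by
    conv_lhs => rw [← ha.2 x hx]
    exact a.symm_apply_apply x⟩

theorem mem_inertia {G : Subgroup (RingAut K)} {σ : RingAut K} :
    σ ∈ F.inertia G ↔ σ ∈ G ∧ ∀ x ∈ F.comp 1, σ x = x := Iff.rfl

end GradedField

/-- A subring `S` containing a subring `L`, viewed as an `L`-submodule of the ambient ring. -/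
def Subring.toSubmoduleOver {K : Type*} [CommRing K] (L S : Subring K) (hLS : L ≤ S) :
    Submodule ↥L K where
  carrier := S
  add_mem' := fun ha hb => S.add_mem ha hb
  zero_mem' := S.zero_mem
  smul_mem' := fun c x hx => S.mul_mem (hLS c.2) hx

section ZR

variable {H : Type*} [CommGroup H] [DecidableEq H] {K : Type*} [CommRing K]

/-- The Zariski–Riemann space of graded valuation rings of `K` containing `k₀`. -/
def GradedField.ZR (F : GradedField H K) (k₀ : Subring K) : Type _ :=
  {O : Subring K // F.IsGradedValRing ⊤ O ∧ k₀ ≤ O}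

/-- The set of homogeneous units (nonzero homogeneous elements) of `K`. -/
def GradedField.HomogUnits (F : GradedField H K) : Type _ :=
  {x : K // x ≠ 0 ∧ F.Homogeneous x}

open Classical in
/-- The embedding of the Zariski–Riemann space into `{0,1}^{K^×}` via characteristic
functions. -/
noncomputable def GradedField.chi (F : GradedField H K) (k₀ : Subring K) (O : F.ZR k₀) :
    F.HomogUnits → Bool :=
  fun x => decide (x.1 ∈ O.1)

/-- Basic open sets `P{F}∖{G}` of the constructible topology, for finite sets `F`, `G` of
homogeneous units. -/
def GradedField.constructibleBasis (F : GradedField H K) (k₀ : Subring K) :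
    Set (Set (F.ZR k₀)) :=
  {s | ∃ Fs Gs : Finset K, (∀ a ∈ Fs, a ≠ 0 ∧ F.Homogeneous a) ∧
    (∀ b ∈ Gs, b ≠ 0 ∧ F.Homogeneous b) ∧
    s = {O : F.ZR k₀ | (∀ a ∈ Fs, a ∈ O.1) ∧ ∀ b ∈ Gs, b ∉ O.1}}

/-- The constructible topology on the Zariski–Riemann space. -/
def GradedField.constructibleTop (F : GradedField H K) (k₀ : Subring K) :
    TopologicalSpace (F.ZR k₀) :=
  TopologicalSpace.generateFrom (F.constructibleBasis k₀)

/-!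
Each `σ ∈ I` preserves the components and is trivial on `K₁`, so it acts on `K_r`, a
one-dimensional `K₁`-space, by a scalar `ξ(σ, r) ∈ K₁^×`. The scalar is multiplicative in `σ`
and in `r`, it is trivial in `r` exactly on `V`, and it determines `σ` because `K` is the sum
of its components. A bimultiplicative pairing into the units of a field that is nondegenerate
on both sides embeds each of the two finite groups into the character group of the other, and
a finite group has at most as many characters into a field as it has elements; hence
`#(ρ(K^×)/V) = #I`. Finally `K^I = ⊕_{v ∈ V} K_v`, so nonzero elements of `K_r`, one for each
coset `r V` of `ρ(K^×)`, form a `K^I`-basis of `K`.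
-/

section UnitsValuedHom

variable (R : Type*) [CommRing R] [IsDomain R]

theorem finite_monoidHom_units (G : Type*) [Group G] [Finite G] : Finite (G →* Rˣ) := by
  have : NeZero (Nat.card G) := ⟨Nat.card_pos.ne'⟩
  refine Finite.of_injective
    (fun (f : G →* Rˣ) (g : G) => (⟨f g, ?_⟩ : rootsOfUnity (Nat.card G) R)) ?_
  · rw [mem_rootsOfUnity, ← map_pow, pow_card_eq_one', map_one]
  · intro f g hfg
    ext x
    simpa [Subtype.ext_iff, Units.ext_iff] using congrFun hfg x

-- Write `G` as a product of cyclic groups `ℤ/n`; a hom `ℤ/n → Rˣ` is an `n`-th root of unity.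
theorem CommGroup.card_monoidHom_units_le (G : Type*) [CommGroup G] [Finite G] :
    Nat.card (G →* Rˣ) ≤ Nat.card G := by
  classical
  obtain ⟨ι, _, n, hn, ⟨e⟩⟩ := CommGroup.equiv_prod_multiplicative_zmod_of_finite G
  have : Fintype ι := Fintype.ofFinite ι
  have : ∀ i, NeZero (n i) := fun i => NeZero.of_gt (hn i)
  have card_cyclic : ∀ i, Nat.card (Multiplicative (ZMod (n i))) = n i := fun i => by
    rw [Nat.card_eq_fintype_card, Fintype.card_multiplicative, ZMod.card]
  rw [Nat.card_congr (e.monoidHomCongrLeft.trans (Pi.monoidHomMulEquiv _ _)).toEquiv,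
    Nat.card_congr e.toEquiv, Nat.card_pi, Nat.card_pi]
  refine Finset.prod_le_prod' fun i _ => ?_
  obtain ⟨E⟩ := IsCyclic.monoidHom_mulEquiv_rootsOfUnity (Multiplicative (ZMod (n i))) Rˣ
  rw [Nat.card_congr (E.trans (rootsOfUnityUnitsMulEquiv R _)).toEquiv, card_cyclic]
  exact card_rootsOfUnity R (n i)

theorem card_monoidHom_units_le (G : Type*) [Group G] [Finite G] :
    Nat.card (G →* Rˣ) ≤ Nat.card G :=
  calc Nat.card (G →* Rˣ) = Nat.card (Abelianization G →* Rˣ) :=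
        Nat.card_congr Abelianization.lift
    _ ≤ Nat.card (Abelianization G) := CommGroup.card_monoidHom_units_le R _
    _ ≤ Nat.card G := Nat.card_le_card_of_surjective _ QuotientGroup.mk_surjective

theorem card_quotient_ker_eq_of_injective_flip {A B : Type*} [Group A] [Group B] [Finite B]
    (φ : A →* B →* Rˣ) (hφ : Function.Injective φ.flip) :
    Nat.card (A ⧸ φ.ker) = Nat.card B := by
  have := finite_monoidHom_units R B
  set ψ := QuotientGroup.kerLift φ
  have hψ : Function.Injective ψ := QuotientGroup.kerLift_injective φ
  have : Finite (A ⧸ φ.ker) := Finite.of_injective ψ hψ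
  have hψ' : Function.Injective ψ.flip := fun σ τ h => hφ <| MonoidHom.ext fun a =>
    DFunLike.congr_fun h (a : A ⧸ φ.ker)
  have := finite_monoidHom_units R (A ⧸ φ.ker)
  exact le_antisymm
    ((Nat.card_le_card_of_injective ψ hψ).trans (card_monoidHom_units_le R B))
    ((Nat.card_le_card_of_injective ψ.flip hψ').trans (card_monoidHom_units_le R _))

end UnitsValuedHom

theorem Subgroup.div_out_mem_iff {G : Type*} [CommGroup G] {S V : Subgroup G} (a : S)
    (q : S ⧸ V.subgroupOf S) : (a : G) / (q.out : G) ∈ V ↔ (a : S ⧸ V.subgroupOf S) = q := by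
  conv_rhs => rw [← QuotientGroup.out_eq' q]
  rw [QuotientGroup.eq, Subgroup.mem_subgroupOf, ← inv_mem_iff]
  simp [div_eq_mul_inv, mul_comm]

namespace GradedField

open DirectSum

variable {H : Type*} [CommGroup H] [DecidableEq H] {K : Type*} [CommRing K]

theorem nontrivial (F : GradedField H K) : Nontrivial K := ⟨⟨0, 1, F.zero_ne_one⟩⟩

section Decomposition

variable (F : GradedField H K)

noncomputable instance : Decomposition F.comp := F.isInternal.chooseDecomposition

variable {F}

theorem isUnit_of_mem {r : H} {x : K} (hx : x ∈ F.comp r) (hx0 : x ≠ 0) : IsUnit x :=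
  let ⟨_, _, hxy⟩ := F.inv_mem hx hx0
  .of_mul_eq_one _ hxy

theorem mem_fullValueGroup_iff {r : H} : r ∈ F.fullValueGroup ↔ ∃ x ∈ F.comp r, x ≠ 0 :=
  ⟨fun ⟨x, hx, hx0, _⟩ => ⟨x, hx, hx0⟩, fun ⟨x, hx, hx0⟩ => ⟨x, hx, hx0, trivial⟩⟩

theorem mem_fullValueGroup_of_mem {r : H} {x : K} (hx : x ∈ F.comp r) (hx0 : x ≠ 0) :
    r ∈ F.fullValueGroup :=
  mem_fullValueGroup_iff.mpr ⟨x, hx, hx0⟩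

theorem exists_mem_mul_eq {r s : H} {u x : K} (hu : u ∈ F.comp r) (hu0 : u ≠ 0)
    (hx : x ∈ F.comp (s * r)) : ∃ c ∈ F.comp s, x = c * u := by
  obtain ⟨u', hu', huu'⟩ := F.inv_mem hu hu0
  refine ⟨x * u', by simpa using F.mul_mem hx hu', ?_⟩
  rw [mul_assoc, mul_comm u', huu', mul_one]

variable (F) in
theorem isField_oneComponent : IsField F.oneComponent where
  exists_pair_ne := ⟨0, 1, fun h => F.zero_ne_one (congrArg Subtype.val h)⟩
  mul_comm := mul_comm
  mul_inv_cancel {a} ha := by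
    obtain ⟨b, hb, hab⟩ := F.inv_mem a.2 fun h => ha (Subtype.ext h)
    exact ⟨⟨b, by simpa [mem_oneComponent] using hb⟩, Subtype.ext hab⟩

noncomputable instance : Field F.oneComponent := F.isField_oneComponent.toField

theorem coe_decompose_mul_of_mem_right {r : H} {u : K} (hu : u ∈ F.comp r) (x : K) (d : H) :
    (DirectSum.decompose F.comp (x * u) d : K) =
      DirectSum.decompose F.comp x (d * r⁻¹) * u := by
  induction x using Decomposition.inductionOn F.comp with
  | zero => simp
  | @homogeneous i m =>
    have hmu : (m : K) * u ∈ F.comp (i * r) := F.mul_mem m.2 hu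
    by_cases hd : i * r = d
    · rw [decompose_of_mem_same _ (hd ▸ hmu), ← hd, mul_inv_cancel_right, decompose_coe,
        of_eq_same]
    · rw [decompose_of_mem_ne _ hmu hd, decompose_coe, of_eq_of_ne, ZeroMemClass.coe_zero,
        zero_mul]
      rintro rfl
      exact hd (inv_mul_cancel_right _ _)
  | add x y hx hy =>
    simp only [add_mul, decompose_add, DirectSum.add_apply, AddMemClass.coe_add, hx, hy]

theorem coe_decompose_map {σ : RingAut K} (hσ : F.IsGradedAut σ) (x : K) (i : H) :
    (DirectSum.decompose F.comp (σ x) i : K) = σ (DirectSum.decompose F.comp x i) := by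
  induction x using Decomposition.inductionOn F.comp with
  | zero => simp
  | @homogeneous j m =>
    by_cases hj : j = i
    · subst hj
      rw [decompose_of_mem_same _ (hσ _ _ m.2), decompose_of_mem_same _ m.2]
    · rw [decompose_of_mem_ne _ (hσ _ _ m.2) hj, decompose_of_mem_ne _ m.2 hj, map_zero]
  | add x y hx hy =>
    simp only [map_add, decompose_add, DirectSum.add_apply, AddMemClass.coe_add, hx, hy]

theorem ringAut_ext {σ τ : RingAut K}
    (h : ∀ r ∈ F.fullValueGroup, ∀ x ∈ F.comp r, σ x = τ x) : σ = τ := by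
  ext x
  induction x using Decomposition.inductionOn F.comp with
  | zero => simp
  | @homogeneous r m =>
    by_cases hm : (m : K) = 0
    · simp [hm]
    · exact h r (mem_fullValueGroup_of_mem m.2 hm) m m.2
  | add x y hx hy => simp only [map_add, hx, hy]

end Decomposition

section ScalesBy

variable (F : GradedField H K)

def ScalesBy (σ : RingAut K) (r : H) (ξ : K) : Prop := ∀ x ∈ F.comp r, σ x = ξ * x

variable {F} {σ τ : RingAut K} {r r' : H} {ξ ξ' : K}

theorem scalesBy_one_iff : F.ScalesBy σ r 1 ↔ ∀ x ∈ F.comp r, σ x = x := by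
  simp only [ScalesBy, one_mul]

theorem ScalesBy.unique (hr : r ∈ F.fullValueGroup) (h : F.ScalesBy σ r ξ)
    (h' : F.ScalesBy σ r ξ') : ξ = ξ' := by
  obtain ⟨u, hu, hu0⟩ := mem_fullValueGroup_iff.mp hr
  exact (isUnit_of_mem hu hu0).mul_right_cancel ((h u hu).symm.trans (h' u hu))

theorem ScalesBy.mem_oneComponent (hσ : F.IsGradedAut σ) (hr : r ∈ F.fullValueGroup)
    (h : F.ScalesBy σ r ξ) : ξ ∈ F.oneComponent := by
  obtain ⟨u, hu, hu0⟩ := mem_fullValueGroup_iff.mp hr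
  obtain ⟨u', hu', huu'⟩ := F.inv_mem hu hu0
  have hξ : ξ = σ u * u' := by rw [h u hu, mul_assoc, huu', mul_one]
  rw [hξ, GradedField.mem_oneComponent]
  simpa using F.mul_mem (hσ r u hu) hu'

theorem exists_scalesBy (hσ : F.IsGradedAut σ) (hσ1 : ∀ x ∈ F.comp 1, σ x = x)
    (hr : r ∈ F.fullValueGroup) : ∃ ξ ∈ F.oneComponent, ξ ≠ 0 ∧ F.ScalesBy σ r ξ := by
  obtain ⟨u, hu, hu0⟩ := mem_fullValueGroup_iff.mp hr
  obtain ⟨u', hu', huu'⟩ := F.inv_mem hu hu0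
  have hscales : F.ScalesBy σ r (σ u * u') := fun x hx => by
    obtain ⟨c, hc, rfl⟩ := exists_mem_mul_eq hu hu0 (s := 1) (by rwa [one_mul])
    rw [map_mul, hσ1 c hc]
    linear_combination (-(c * σ u)) * huu'
  refine ⟨_, hscales.mem_oneComponent hσ hr, fun h0 => hu0 ?_, hscales⟩
  rw [← map_eq_zero_iff σ σ.injective, hscales u hu, h0, zero_mul]

theorem ScalesBy.ringAut_mul (hσ1 : ∀ x ∈ F.comp 1, σ x = x) (hξ' : ξ' ∈ F.oneComponent)
    (h : F.ScalesBy σ r ξ) (h' : F.ScalesBy τ r ξ') : F.ScalesBy (σ * τ) r (ξ * ξ') :=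
  fun x hx => by
    rw [RingAut.mul_apply, h' x hx, map_mul, hσ1 ξ' hξ', h x hx]
    ring

theorem ScalesBy.mul (hr' : r' ∈ F.fullValueGroup) (h : F.ScalesBy σ r ξ)
    (h' : F.ScalesBy σ r' ξ') : F.ScalesBy σ (r * r') (ξ * ξ') := fun x hx => by
  obtain ⟨v, hv, hv0⟩ := mem_fullValueGroup_iff.mp hr'
  obtain ⟨c, hc, rfl⟩ := exists_mem_mul_eq hv hv0 hx
  rw [map_mul, h c hc, h' v hv]
  ring

theorem ScalesBy.eq_of_div (hr : r ∈ F.fullValueGroup) (hr' : r' ∈ F.fullValueGroup)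
    (hdiv : F.ScalesBy σ (r / r') 1) (h : F.ScalesBy σ r ξ) (h' : F.ScalesBy σ r' ξ') :
    ξ = ξ' := by
  have := hdiv.mul hr' h'
  rw [div_mul_cancel, one_mul] at this
  exact h.unique hr this

theorem scalesBy_one_of_apply_eq (hσ : F.IsGradedAut σ) (hσ1 : ∀ x ∈ F.comp 1, σ x = x)
    {x : K} (hx : x ∈ F.comp r) (hx0 : x ≠ 0) (hfix : σ x = x) : F.ScalesBy σ r 1 := by
  obtain ⟨ξ, -, -, hξ⟩ := exists_scalesBy hσ hσ1 (mem_fullValueGroup_of_mem hx hx0)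
  have h1 : ξ = 1 := (isUnit_of_mem hx hx0).mul_right_cancel (by rw [← hξ x hx, hfix, one_mul])
  rwa [h1] at hξ

end ScalesBy

section Pairing

variable (F : GradedField H K) {I : Subgroup (RingAut K)}

noncomputable def inertiaScalar (hGr : ∀ σ ∈ I, F.IsGradedAut σ)
    (hTriv : ∀ σ ∈ I, ∀ x ∈ F.comp 1, σ x = x) (r : F.fullValueGroup) (σ : I) :
    F.oneComponentˣ :=
  have h := exists_scalesBy (hGr σ σ.2) (hTriv σ σ.2) r.2
  Units.mk0 ⟨h.choose, h.choose_spec.1⟩ fun h0 => h.choose_spec.2.1 (congrArg Subtype.val h0)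

variable {F} (hGr : ∀ σ ∈ I, F.IsGradedAut σ) (hTriv : ∀ σ ∈ I, ∀ x ∈ F.comp 1, σ x = x)

theorem scalesBy_inertiaScalar (r : F.fullValueGroup) (σ : I) :
    F.ScalesBy σ r (F.inertiaScalar hGr hTriv r σ : F.oneComponent) :=
  (exists_scalesBy (hGr σ σ.2) (hTriv σ σ.2) r.2).choose_spec.2.2

theorem inertiaScalar_eq_iff {r : F.fullValueGroup} {σ : I} {ξ : F.oneComponentˣ} :
    F.inertiaScalar hGr hTriv r σ = ξ ↔ F.ScalesBy σ r (ξ : F.oneComponent) := by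
  refine ⟨fun h => h ▸ scalesBy_inertiaScalar hGr hTriv r σ, fun h => ?_⟩
  exact Units.ext <| Subtype.ext <| (scalesBy_inertiaScalar hGr hTriv r σ).unique r.2 h

variable (F) in
/-- The pairing `ρ(K^×) × I → K₁^×`, `(r, σ) ↦ σ(x)/x` for any nonzero `x ∈ K_r`. -/
noncomputable def inertiaPairing : F.fullValueGroup →* I →* F.oneComponentˣ :=
  MonoidHom.mk'
    (fun r => MonoidHom.mk' (F.inertiaScalar hGr hTriv r) fun σ τ =>
      (inertiaScalar_eq_iff hGr hTriv).mpr <|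
        (scalesBy_inertiaScalar hGr hTriv r σ).ringAut_mul (hTriv σ σ.2) (Subtype.prop _)
          (scalesBy_inertiaScalar hGr hTriv r τ))
    fun r r' => MonoidHom.ext fun σ =>
      (inertiaScalar_eq_iff hGr hTriv).mpr <|
        (scalesBy_inertiaScalar hGr hTriv r σ).mul r'.2 (scalesBy_inertiaScalar hGr hTriv r' σ)

theorem inertiaPairing_apply_eq_one_iff {r : F.fullValueGroup} {σ : I} :
    F.inertiaPairing hGr hTriv r σ = 1 ↔ ∀ x ∈ F.comp r, (σ : RingAut K) x = x := by
  rw [← scalesBy_one_iff]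
  exact inertiaScalar_eq_iff hGr hTriv

theorem injective_inertiaPairing_flip :
    Function.Injective (F.inertiaPairing hGr hTriv).flip := by
  intro σ τ h
  refine Subtype.ext <| ringAut_ext (F := F) fun r hr x hx => ?_
  have hστ : F.inertiaPairing hGr hTriv ⟨r, hr⟩ σ = F.inertiaPairing hGr hTriv ⟨r, hr⟩ τ :=
    DFunLike.congr_fun h ⟨r, hr⟩
  rw [scalesBy_inertiaScalar hGr hTriv ⟨r, hr⟩ σ x hx,
    scalesBy_inertiaScalar hGr hTriv ⟨r, hr⟩ τ x hx]
  exact congrArg (fun ξ : F.oneComponentˣ => ((ξ : F.oneComponent) : K) * x) hστ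

variable (F) in
/-- The degrees `r` on which `I` acts trivially, i.e. `V = ρ((K^I)^×)`. -/
noncomputable def fixedDegrees : Subgroup H :=
  (F.inertiaPairing hGr hTriv).ker.map F.fullValueGroup.subtype

theorem mem_fixedDegrees_iff {r : H} :
    r ∈ F.fixedDegrees hGr hTriv ↔
      r ∈ F.fullValueGroup ∧ ∀ σ ∈ I, ∀ x ∈ F.comp r, σ x = x := by
  simp only [fixedDegrees, Subgroup.mem_map, MonoidHom.mem_ker, Subgroup.coe_subtype]
  constructor
  · rintro ⟨r, hr, rfl⟩
    exact ⟨r.2, fun σ hσ => (inertiaPairing_apply_eq_one_iff hGr hTriv).mp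
      (DFunLike.congr_fun hr ⟨σ, hσ⟩)⟩
  · rintro ⟨hr, hfix⟩
    exact ⟨⟨r, hr⟩, MonoidHom.ext fun σ =>
      (inertiaPairing_apply_eq_one_iff hGr hTriv).mpr (hfix σ σ.2), rfl⟩

theorem fixedDegrees_subgroupOf :
    (F.fixedDegrees hGr hTriv).subgroupOf F.fullValueGroup = (F.inertiaPairing hGr hTriv).ker :=
  Subgroup.comap_map_eq_self_of_injective Subtype.val_injective _

end Pairing

section Basis

variable (F : GradedField H K)

noncomputable def homogeneousUnit (r : F.fullValueGroup) : K :=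
  (mem_fullValueGroup_iff.mp r.2).choose

theorem homogeneousUnit_mem (r : F.fullValueGroup) : F.homogeneousUnit r ∈ F.comp r :=
  (mem_fullValueGroup_iff.mp r.2).choose_spec.1

theorem homogeneousUnit_ne_zero (r : F.fullValueGroup) : F.homogeneousUnit r ≠ 0 :=
  (mem_fullValueGroup_iff.mp r.2).choose_spec.2

variable {F} {L : Subring K} {V : Subgroup H}

theorem mem_of_mem_comp (hL : ∀ x, x ∈ L ↔ ∀ i ∉ V, (DirectSum.decompose F.comp x i : K) = 0)
    {v : H} {c : K} (hv : v ∈ V) (hc : c ∈ F.comp v) : c ∈ L :=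
  (hL c).mpr fun _ hi => decompose_of_mem_ne _ hc (ne_of_mem_of_not_mem hv hi)

theorem mem_span_homogeneousUnit
    (hL : ∀ x, x ∈ L ↔ ∀ i ∉ V, (DirectSum.decompose F.comp x i : K) = 0) (z : K) :
    z ∈ Submodule.span L
      (Set.range fun q : F.fullValueGroup ⧸ V.subgroupOf F.fullValueGroup =>
        F.homogeneousUnit q.out) := by
  induction z using Decomposition.inductionOn F.comp with
  | zero => exact Submodule.zero_mem _
  | @homogeneous i m =>
    by_cases hm : (m : K) = 0
    · rw [hm]
      exact Submodule.zero_mem _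
    set r : F.fullValueGroup := ⟨i, mem_fullValueGroup_of_mem m.2 hm⟩
    set q : F.fullValueGroup ⧸ V.subgroupOf F.fullValueGroup := QuotientGroup.mk r
    have hrq : i / (q.out : H) ∈ V := (Subgroup.div_out_mem_iff r q).mpr rfl
    obtain ⟨c, hc, hmc⟩ := exists_mem_mul_eq (F.homogeneousUnit_mem q.out)
      (F.homogeneousUnit_ne_zero q.out) (by rw [div_mul_cancel]; exact m.2)
    rw [hmc]
    exact Submodule.smul_mem _ (⟨c, mem_of_mem_comp hL hrq hc⟩ : L)
      (Submodule.subset_span ⟨q, rfl⟩)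
  | add x y hx hy => exact Submodule.add_mem _ hx hy

theorem linearIndependent_homogeneousUnit
    (hL : ∀ x, x ∈ L ↔ ∀ i ∉ V, (DirectSum.decompose F.comp x i : K) = 0) :
    LinearIndependent L fun q : F.fullValueGroup ⧸ V.subgroupOf F.fullValueGroup =>
      F.homogeneousUnit q.out := by
  classical
  rw [linearIndependent_iff']
  intro s g hsum q₀ hq₀
  have hcomp : ∀ i, (DirectSum.decompose F.comp (g q₀ : K) i : K) = 0 := by
    intro i
    by_cases hi : i ∈ V
    swap
    · exact (hL _).mp (g q₀).2 i hi
    -- in degree `i * q₀.out`, only the `q₀`-term of the relation survives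
    have hproj : ∑ q ∈ s, (DirectSum.decompose F.comp ((g q : K) * F.homogeneousUnit q.out)
        (i * q₀.out) : K) = 0 := by
      simpa [Subring.smul_def] using
        congrArg (fun z => (DirectSum.decompose F.comp z (i * q₀.out) : K)) hsum
    simp only [coe_decompose_mul_of_mem_right (F.homogeneousUnit_mem _)] at hproj
    rw [Finset.sum_eq_single_of_mem q₀ hq₀, mul_inv_cancel_right] at hproj
    · exact (isUnit_of_mem (F.homogeneousUnit_mem _)
        (F.homogeneousUnit_ne_zero _)).mul_left_eq_zero.mp hproj
    · intro q _ hq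
      refine mul_eq_zero_of_left ((hL _).mp (g q).2 _ fun hV => hq ?_) _
      have : ((q₀.out : F.fullValueGroup) : H) / q.out ∈ V := by
        simpa [div_eq_mul_inv, mul_assoc] using V.mul_mem (V.inv_mem hi) hV
      rw [← (Subgroup.div_out_mem_iff _ q).mp this, QuotientGroup.out_eq']
  exact Subtype.ext <| (sum_support_decompose F.comp (g q₀ : K)).symm.trans <|
    Finset.sum_eq_zero fun i _ => hcomp i

theorem rank_eq_card_quotient
    (hL : ∀ x, x ∈ L ↔ ∀ i ∉ V, (DirectSum.decompose F.comp x i : K) = 0)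
    [Finite (F.fullValueGroup ⧸ V.subgroupOf F.fullValueGroup)] :
    Module.rank L K = Nat.card (F.fullValueGroup ⧸ V.subgroupOf F.fullValueGroup) := by
  have := F.nontrivial
  have := Fintype.ofFinite (F.fullValueGroup ⧸ V.subgroupOf F.fullValueGroup)
  rw [rank_eq_card_basis (Module.Basis.mk (linearIndependent_homogeneousUnit hL)
    fun z _ => mem_span_homogeneousUnit hL z), Nat.card_eq_fintype_card]

end Basis

section FixedSubring

variable {F : GradedField H K} {I : Subgroup (RingAut K)}

theorem mem_fixedSubring_iff (hGr : ∀ σ ∈ I, F.IsGradedAut σ)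
    (hTriv : ∀ σ ∈ I, ∀ x ∈ F.comp 1, σ x = x) (x : K) :
    x ∈ fixedSubring I ↔
      ∀ i ∉ F.fixedDegrees hGr hTriv, (DirectSum.decompose F.comp x i : K) = 0 := by
  classical
  constructor
  · intro hx i hi
    by_contra h0
    have hxi := (DirectSum.decompose F.comp x i).2
    refine hi <| (mem_fixedDegrees_iff hGr hTriv).mpr
      ⟨mem_fullValueGroup_of_mem hxi h0, fun σ hσ => scalesBy_one_iff.mp ?_⟩
    refine scalesBy_one_of_apply_eq (hGr σ hσ) (hTriv σ hσ) hxi h0 ?_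
    rw [← coe_decompose_map (hGr σ hσ), hx σ hσ]
  · intro hx
    rw [← DirectSum.sum_support_decompose F.comp x]
    refine sum_mem fun i _ => ?_
    by_cases hi : i ∈ F.fixedDegrees hGr hTriv
    · exact fun σ hσ => ((mem_fixedDegrees_iff hGr hTriv).mp hi).2 σ hσ _
        (DirectSum.decompose F.comp x i).2
    · rw [hx i hi]
      exact zero_mem _

end FixedSubring

end GradedField

universe u v

/-- Let `I` be a finite group of graded automorphisms of an `H`-graded field `K` acting
trivially on `K₁`, `F' = K^I`, and `V = ρ(F'^×)` the subgroup of grading indices `r` with `I`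
acting trivially on `K_r`.  Then the pairing `ξ : I × (ρ(K^×)/V) → K₁^×`,
`(σ, r mod V) ↦ σ(x)/x` for nonzero `x ∈ K_r`, is well defined, biadditive, and
nondegenerate in each variable; consequently `ρ(K^×)/V` is finite of order `#I` and
`[K:F'] = #I`. -/
theorem GradedField.inertia_pairing {H : Type u} [CommGroup H] [DecidableEq H] {K : Type v}
    [CommRing K] (F : GradedField H K) (I : Subgroup (RingAut K)) [Finite I]
    (hGr : ∀ σ ∈ I, F.IsGradedAut σ) (hTriv : ∀ σ ∈ I, ∀ x ∈ F.comp 1, σ x = x) :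
    ∃ V : Subgroup H,
      (V : Set H) =
        {r | r ∈ F.fullValueGroup ∧ ∀ σ ∈ I, ∀ x ∈ F.comp r, σ x = x} ∧
      -- the pairing is defined: each `σ ∈ I` scales `K_r` by some nonzero `ξ ∈ K₁`
      (∀ σ ∈ I, ∀ r ∈ F.fullValueGroup,
        ∃ ξ ∈ F.oneComponent, ξ ≠ 0 ∧ ∀ x ∈ F.comp r, σ x = ξ * x) ∧
      -- well defined on `ρ(K^×)/V`: the scaling factor depends only on the coset of `r`
      (∀ σ ∈ I, ∀ r ∈ F.fullValueGroup, ∀ r' ∈ F.fullValueGroup, r / r' ∈ V →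
        ∀ ξ ξ' : K, (∀ x ∈ F.comp r, σ x = ξ * x) → (∀ x ∈ F.comp r', σ x = ξ' * x) →
          ξ = ξ') ∧
      -- biadditive in `σ`
      (∀ σ ∈ I, ∀ τ ∈ I, ∀ r ∈ F.fullValueGroup, ∀ ξ ξ' : K,
        (∀ x ∈ F.comp r, σ x = ξ * x) → (∀ x ∈ F.comp r, τ x = ξ' * x) →
          ∀ x ∈ F.comp r, (σ * τ : RingAut K) x = ξ * ξ' * x) ∧
      -- biadditive in `r`
      (∀ σ ∈ I, ∀ r ∈ F.fullValueGroup, ∀ r' ∈ F.fullValueGroup, ∀ ξ ξ' : K,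
        (∀ x ∈ F.comp r, σ x = ξ * x) → (∀ x ∈ F.comp r', σ x = ξ' * x) →
          ∀ x ∈ F.comp (r * r'), σ x = ξ * ξ' * x) ∧
      -- nondegenerate in `σ`
      (∀ σ ∈ I, σ ≠ 1 → ∃ r ∈ F.fullValueGroup, ∃ x ∈ F.comp r, σ x ≠ x) ∧
      -- nondegenerate in `r`
      (∀ r ∈ F.fullValueGroup, r ∉ V → ∃ σ ∈ I, ∃ x ∈ F.comp r, σ x ≠ x) ∧
      -- consequently: `#(ρ(K^×)/V) = #I` ...
      Nat.card (↥F.fullValueGroup ⧸ V.subgroupOf F.fullValueGroup) = Nat.card I ∧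
      -- ... and `[K:F'] = #I`
      Module.rank ↥(fixedSubring I) K = Nat.card I := by
  set V := F.fixedDegrees hGr hTriv
  have hcard : Nat.card (F.fullValueGroup ⧸ V.subgroupOf F.fullValueGroup) = Nat.card I := by
    rw [fixedDegrees_subgroupOf]
    exact card_quotient_ker_eq_of_injective_flip _ _ (injective_inertiaPairing_flip hGr hTriv)
  have : Finite (F.fullValueGroup ⧸ V.subgroupOf F.fullValueGroup) :=
    Nat.finite_of_card_ne_zero (hcard ▸ Nat.card_pos.ne')
  refine ⟨V, Set.ext fun r => mem_fixedDegrees_iff hGr hTriv,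
    fun σ hσ r hr => exists_scalesBy (hGr σ hσ) (hTriv σ hσ) hr,
    fun σ hσ r hr r' hr' hV _ _ => ScalesBy.eq_of_div hr hr'
      (scalesBy_one_iff.mpr (((mem_fixedDegrees_iff hGr hTriv).mp hV).2 σ hσ)),
    fun σ hσ τ hτ r hr _ _ h h' =>
      ScalesBy.ringAut_mul (hTriv σ hσ) (ScalesBy.mem_oneComponent (hGr τ hτ) hr h') h h',
    fun σ _ r _ r' hr' _ _ => ScalesBy.mul hr',
    fun σ _ hσ1 => ?_,
    fun r hr hrV => ?_, hcard, ?_⟩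
  · by_contra! hfix
    exact hσ1 (ringAut_ext hfix)
  · by_contra! hfix
    exact hrV ((mem_fixedDegrees_iff hGr hTriv).mpr ⟨hr, hfix⟩)
  · rw [rank_eq_card_quotient (mem_fixedSubring_iff hGr hTriv), hcard]
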